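/- arXiv:2411.10128 — 2 statements merged into one kernel-verified Lean document; each statement's English description precedes it below -/
import Mathlib

section
/- Let X be a measurable space, c > 0, and let ρ be a probability measure on X × ℝ such that √c·|y| < 1 for ρ-almost every (x,y). Write φ(y) := (1/√c)·artanh(√c·y), assume (x,y) ↦ φ(y) is square-integrable with respect to ρ, and let f_ρ : X → ℝ be the hyperbolic regression function, i.e. f_ρ ∘ Prod.fst is the conditional expectation of (x,y) ↦ φ(y) with respect to the σ-algebra generated by Prod.fst. Then for every measurable g : X → ℝ such that (x,y) ↦ g(x) is square-integrable with respect to ρ, the hyperbolic generalization error satisfies ∫ (g(x) − φ(y))² dρ(x,y) ≥ ∫ (f_ρ(x) − φ(y))² dρ(x,y); that is, the hyperbolic regression function minimizes the hyperbolic generalization error. -/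
open MeasureTheory

/-- Inverse hyperbolic tangent. -/
noncomputable def Real.artanhLog (x : ℝ) : ℝ := (1 / 2) * Real.log ((1 + x) / (1 - x))

/-- The one-dimensional logarithmic map at the origin of the Poincaré disc of
curvature `-c`:  `φ(y) = (1/√c) · artanh(√c · y)`. -/
noncomputable def hypLog (c : ℝ) (y : ℝ) : ℝ :=
  (1 / Real.sqrt c) * Real.artanhLog (Real.sqrt c * y)

/-! The conditional expectation `μ[f|m]` of an `L²` function is the orthogonal projection of `f`
onto the `m`-measurable functions: `f - μ[f|m]` is orthogonal to every `m`-measurable `h`, so for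
`m`-measurable `g` Pythagoras gives `‖g - f‖² = ‖g - μ[f|m]‖² + ‖μ[f|m] - f‖²`. -/

namespace MeasureTheory

variable {Ω : Type*} {m m₀ : MeasurableSpace Ω} {μ : Measure Ω}

lemma integral_mul_condExp_of_stronglyMeasurable_left (hm : m ≤ m₀) [SigmaFinite (μ.trim hm)]
    {f h : Ω → ℝ} (hh : StronglyMeasurable[m] h) (hhf : Integrable (h * f) μ)
    (hf : Integrable f μ) :
    ∫ x, h x * μ[f|m] x ∂μ = ∫ x, h x * f x ∂μ :=
  calc ∫ x, h x * μ[f|m] x ∂μ = ∫ x, μ[h * f|m] x ∂μ :=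
        integral_congr_ae (condExp_mul_of_stronglyMeasurable_left hh hhf hf).symm
    _ = ∫ x, h x * f x ∂μ := integral_condExp hm

lemma integral_sq_sub_eq_add_integral_sq_condExp_sub (hm : m ≤ m₀) [IsFiniteMeasure μ]
    {f g : Ω → ℝ} (hf : MemLp f 2 μ) (hg : StronglyMeasurable[m] g) (hg₂ : MemLp g 2 μ) :
    ∫ x, (g x - f x) ^ 2 ∂μ =
      ∫ x, (g x - μ[f|m] x) ^ 2 ∂μ + ∫ x, (μ[f|m] x - f x) ^ 2 ∂μ := by
  set F := μ[f|m]
  have hF : MemLp F 2 μ := hf.condExp one_le_two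
  have hh : StronglyMeasurable[m] (g - F) := hg.sub stronglyMeasurable_condExp
  have hh₂ : MemLp (g - F) 2 μ := hg₂.sub hF
  have hcross : ∫ x, (g x - F x) * (F x - f x) ∂μ = 0 := by
    have hhf : Integrable ((g - F) * f) μ := hh₂.integrable_mul hf
    simp only [mul_sub]
    rw [integral_sub (by exact hh₂.integrable_mul hF) (by exact hhf), sub_eq_zero]
    exact integral_mul_condExp_of_stronglyMeasurable_left hm hh hhf (hf.integrable one_le_two)
  have hsq₁ : Integrable (fun x => (g x - F x) ^ 2) μ := hh₂.integrable_sq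
  have hsq₂ : Integrable (fun x => (F x - f x) ^ 2) μ := (hF.sub hf).integrable_sq
  have hmix : Integrable (fun x => 2 * ((g x - F x) * (F x - f x))) μ :=
    (hh₂.integrable_mul (hF.sub hf)).const_mul 2
  calc ∫ x, (g x - f x) ^ 2 ∂μ
      = ∫ x, (g x - F x) ^ 2 + 2 * ((g x - F x) * (F x - f x)) + (F x - f x) ^ 2 ∂μ := by
        congr 1; funext x; ring
    _ = ∫ x, (g x - F x) ^ 2 ∂μ + ∫ x, (F x - f x) ^ 2 ∂μ := by
        rw [integral_add (by exact hsq₁.add hmix) hsq₂, integral_add hsq₁ hmix, integral_const_mul,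
          hcross, mul_zero, add_zero]

lemma integral_sq_condExp_sub_le (hm : m ≤ m₀) [IsFiniteMeasure μ]
    {f g : Ω → ℝ} (hf : MemLp f 2 μ) (hg : StronglyMeasurable[m] g) (hg₂ : MemLp g 2 μ) :
    ∫ x, (μ[f|m] x - f x) ^ 2 ∂μ ≤ ∫ x, (g x - f x) ^ 2 ∂μ := by
  rw [integral_sq_sub_eq_add_integral_sq_condExp_sub hm hf hg hg₂]
  exact le_add_of_nonneg_left (integral_nonneg fun x => sq_nonneg _)

end MeasureTheory

theorem hyperbolic_regression_minimizes_HGE_general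
    {X : Type*} [MeasurableSpace X] (c : ℝ)
    (ρ : Measure (X × ℝ)) [IsProbabilityMeasure ρ]
    (hφ : MemLp (fun p : X × ℝ => hypLog c p.2) 2 ρ)
    (fρ : X → ℝ)
    (hfρ : (fun p : X × ℝ => fρ p.1) =
      ρ[(fun p : X × ℝ => hypLog c p.2) | MeasurableSpace.comap Prod.fst inferInstance])
    (g : X → ℝ) (hg : Measurable g)
    (hgL2 : MemLp (fun p : X × ℝ => g p.1) 2 ρ) :
    ∫ p, (g p.1 - hypLog c p.2) ^ 2 ∂ρ ≥ ∫ p, (fρ p.1 - hypLog c p.2) ^ 2 ∂ρ := by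
  have hgm : StronglyMeasurable[MeasurableSpace.comap Prod.fst inferInstance]
      (fun p : X × ℝ => g p.1) :=
    (hg.comp (comap_measurable Prod.fst)).stronglyMeasurable
  have hmin := integral_sq_condExp_sub_le measurable_fst.comap_le hφ hgm hgL2
  rw [← hfρ] at hmin
  exact hmin

/-- The hyperbolic regression function minimizes the hyperbolic generalization error. -/
theorem hyperbolic_regression_minimizes_HGE
    {X : Type*} [MeasurableSpace X] (c : ℝ) (hc : 0 < c)
    (ρ : Measure (X × ℝ)) [IsProbabilityMeasure ρ]
    (hdisc : ∀ᵐ p ∂ρ, Real.sqrt c * |p.2| < 1)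
    (hφ : MemLp (fun p : X × ℝ => hypLog c p.2) 2 ρ)
    (fρ : X → ℝ)
    (hfρ : (fun p : X × ℝ => fρ p.1) =
      ρ[(fun p : X × ℝ => hypLog c p.2) | MeasurableSpace.comap Prod.fst inferInstance])
    (g : X → ℝ) (hg : Measurable g)
    (hgL2 : MemLp (fun p : X × ℝ => g p.1) 2 ρ) :
    ∫ p, (g p.1 - hypLog c p.2) ^ 2 ∂ρ ≥ ∫ p, (fρ p.1 - hypLog c p.2) ^ 2 ∂ρ :=
  hyperbolic_regression_minimizes_HGE_general c ρ hφ fρ hfρ g hg hgL2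
end

section
/- Let X be a measurable space, c > 0, and let ρ be a probability measure on X × ℝ such that √c·|y| < 1 for ρ-almost every (x,y). Write φ(y) := (1/√c)·artanh(√c·y), assume (x,y) ↦ φ(y) is square-integrable with respect to ρ, and let f_ρ : X → ℝ be such that f_ρ ∘ Prod.fst is the conditional expectation of (x,y) ↦ φ(y) with respect to the σ-algebra generated by Prod.fst. Then for every measurable g : X → ℝ such that (x,y) ↦ g(x) is square-integrable with respect to ρ, the excess hyperbolic generalization error satisfies ∫ (g(x) − φ(y))² dρ(x,y) − ∫ (f_ρ(x) − φ(y))² dρ(x,y) = ∫_X (g(x) − f_ρ(x))² dρ_X(x), where ρ_X := Measure.map Prod.fst ρ is the marginal distribution of ρ on X. -/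
/-!
Excess risk is Pythagoras in `L²(ρ)`: `fρ ∘ fst` is the orthogonal projection of `φ` onto the
`σ(fst)`-measurable functions and `g ∘ fst - fρ ∘ fst` lies in that subspace, so the cross term in
`(g - φ)² = (g - fρ)² + 2 (g - fρ)(fρ - φ) + (fρ - φ)²` integrates to zero. The remaining integral
only depends on `x` and is pushed forward to the marginal.
-/

open MeasureTheory

namespace MeasureTheory

variable {α : Type*} {m m₀ : MeasurableSpace α} {μ : Measure α}

theorem integral_mul_condExp_of_stronglyMeasurable (hm : m ≤ m₀) [SigmaFinite (μ.trim hm)]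
    {h f : α → ℝ} (hh : StronglyMeasurable[m] h) (hhf : Integrable (h * f) μ)
    (hf : Integrable f μ) :
    ∫ x, h x * μ[f | m] x ∂μ = ∫ x, h x * f x ∂μ :=
  calc ∫ x, h x * μ[f | m] x ∂μ = ∫ x, μ[h * f | m] x ∂μ :=
        integral_congr_ae (condExp_mul_of_stronglyMeasurable_left hh hhf hf).symm
    _ = ∫ x, h x * f x ∂μ := integral_condExp hm

theorem integral_sq_sub_sub_integral_sq_condExp_sub (hm : m ≤ m₀) [IsFiniteMeasure μ]
    {F f : α → ℝ} (hF : StronglyMeasurable[m] F) (hF₂ : MemLp F 2 μ) (hf₂ : MemLp f 2 μ) :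
    ∫ x, (F x - f x) ^ 2 ∂μ - ∫ x, (μ[f | m] x - f x) ^ 2 ∂μ
      = ∫ x, (F x - μ[f | m] x) ^ 2 ∂μ := by
  set E := μ[f | m]
  have hE₂ : MemLp E 2 μ := hf₂.condExp one_le_two
  have hD₂ : MemLp (F - E) 2 μ := hF₂.sub hE₂
  have hD : StronglyMeasurable[m] (F - E) := hF.sub stronglyMeasurable_condExp
  -- `F - E` is `m`-measurable, so it is orthogonal to the residual `E - f`.
  have hcross : ∫ x, (F x - E x) * (E x - f x) ∂μ = 0 := by
    have hDE : Integrable (fun x => (F x - E x) * E x) μ := hD₂.integrable_mul hE₂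
    have hDf : Integrable (fun x => (F x - E x) * f x) μ := hD₂.integrable_mul hf₂
    simp only [mul_sub]
    rw [integral_sub hDE hDf, sub_eq_zero]
    exact integral_mul_condExp_of_stronglyMeasurable hm hD (hD₂.integrable_mul hf₂)
      (hf₂.integrable one_le_two)
  have hDD : Integrable (fun x => (F x - E x) ^ 2) μ := hD₂.integrable_sq
  have hDR : Integrable (fun x => 2 * ((F x - E x) * (E x - f x))) μ :=
    (hD₂.integrable_mul (hE₂.sub hf₂)).const_mul 2
  have hDDR : Integrable (fun x => (F x - E x) ^ 2 + 2 * ((F x - E x) * (E x - f x))) μ :=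
    hDD.add hDR
  have hRR : Integrable (fun x => (E x - f x) ^ 2) μ := (hE₂.sub hf₂).integrable_sq
  calc ∫ x, (F x - f x) ^ 2 ∂μ - ∫ x, (E x - f x) ^ 2 ∂μ
      = ∫ x, ((F x - E x) ^ 2 + 2 * ((F x - E x) * (E x - f x)) + (E x - f x) ^ 2) ∂μ
          - ∫ x, (E x - f x) ^ 2 ∂μ := by
        congr 1
        exact integral_congr_ae (by filter_upwards with x; ring)
    _ = ∫ x, (F x - E x) ^ 2 ∂μ := by
      rw [integral_add hDDR hRR, integral_add hDD hDR, integral_const_mul, hcross]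
      ring

end MeasureTheory

theorem hyperbolic_excess_generalization_error_general
    {X : Type*} [MeasurableSpace X] (c : ℝ)
    (ρ : Measure (X × ℝ)) [IsProbabilityMeasure ρ]
    (hφ : MemLp (fun p : X × ℝ => hypLog c p.2) 2 ρ)
    (fρ : X → ℝ)
    (hfρ : (fun p : X × ℝ => fρ p.1) =
      ρ[(fun p : X × ℝ => hypLog c p.2) | MeasurableSpace.comap Prod.fst inferInstance])
    (g : X → ℝ) (hg : Measurable g)
    (hgL2 : MemLp (fun p : X × ℝ => g p.1) 2 ρ) :
    ∫ p, (g p.1 - hypLog c p.2) ^ 2 ∂ρ - ∫ p, (fρ p.1 - hypLog c p.2) ^ 2 ∂ρ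
      = ∫ x, (g x - fρ x) ^ 2 ∂(Measure.map Prod.fst ρ) := by
  have hfρ_meas : Measurable fρ := (measurable_comap_iff_right Prod.fst_surjective).2
    (hfρ ▸ stronglyMeasurable_condExp.measurable)
  have hpythagoras := integral_sq_sub_sub_integral_sq_condExp_sub measurable_fst.comap_le
    (hg.comp (comap_measurable Prod.fst)).stronglyMeasurable hgL2 hφ
  rw [← hfρ] at hpythagoras
  rw [integral_map (f := fun x => (g x - fρ x) ^ 2) measurable_fst.aemeasurable
    ((hg.sub hfρ_meas).pow_const 2).aestronglyMeasurable]
  exact hpythagoras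

/-- The excess hyperbolic generalization error of `g` over the hyperbolic regression
function `fρ` equals the squared `L²(ρ_X)` distance between `g` and `fρ`, where
`ρ_X` is the marginal of `ρ` on `X`. -/
theorem hyperbolic_excess_generalization_error
    {X : Type*} [MeasurableSpace X] (c : ℝ) (hc : 0 < c)
    (ρ : Measure (X × ℝ)) [IsProbabilityMeasure ρ]
    (hdisc : ∀ᵐ p ∂ρ, Real.sqrt c * |p.2| < 1)
    (hφ : MemLp (fun p : X × ℝ => hypLog c p.2) 2 ρ)
    (fρ : X → ℝ)
    (hfρ : (fun p : X × ℝ => fρ p.1) =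
      ρ[(fun p : X × ℝ => hypLog c p.2) | MeasurableSpace.comap Prod.fst inferInstance])
    (g : X → ℝ) (hg : Measurable g)
    (hgL2 : MemLp (fun p : X × ℝ => g p.1) 2 ρ) :
    ∫ p, (g p.1 - hypLog c p.2) ^ 2 ∂ρ - ∫ p, (fρ p.1 - hypLog c p.2) ^ 2 ∂ρ
      = ∫ x, (g x - fρ x) ^ 2 ∂(Measure.map Prod.fst ρ) :=
  hyperbolic_excess_generalization_error_general c ρ hφ fρ hfρ g hg hgL2
end
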